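/- arXiv:1304.1339 — 5 statements merged into one kernel-verified Lean document; each statement's English description precedes it below -/
import Mathlib

section
/- Let ψ be an n-qubit state, and for each i ∈ Fin n let U_i be a 2×2 unitary matrix. Define the n-qubit state ψ' by ψ' x = ∑_y (∏_i (U_i)_{x i, y i}) · ψ y (i.e. ψ' is obtained from ψ by applying the local unitary U_1 ⊗ ⋯ ⊗ U_n). Then Λ_max(ψ') = Λ_max(ψ), and hence E_G(ψ') = E_G(ψ). (This is the content of Lemma 1: all toric code eigenstates |φ,c,i,j⟩, obtained from a reference ground state by applying tensor products of Pauli matrices and string operators, have the same geometric entanglement.) -/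
open scoped BigOperators
open scoped Classical

noncomputable section

namespace GeomEnt

/-- The ℓ² inner product of two n-qubit amplitude functions. -/
def qInner {n : ℕ} (φ ψ : (Fin n → ZMod 2) → ℂ) : ℂ :=
  ∑ x : Fin n → ZMod 2, (starRingEnd ℂ) (φ x) * ψ x

/-- An n-qubit state: a normalized amplitude function. -/
def IsState {n : ℕ} (ψ : (Fin n → ZMod 2) → ℂ) : Prop :=
  ∑ x : Fin n → ZMod 2, ‖ψ x‖ ^ 2 = 1

/-- A product state of the n single qubits. -/
def IsProductState {n : ℕ} (Φ : (Fin n → ZMod 2) → ℂ) : Prop :=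
  ∃ φ : Fin n → ZMod 2 → ℂ,
    (∀ i, ‖φ i 0‖ ^ 2 + ‖φ i 1‖ ^ 2 = 1) ∧
    ∀ x, Φ x = ∏ i, φ i (x i)

/-- Maximal overlap with product states. -/
def LambdaMax {n : ℕ} (ψ : (Fin n → ZMod 2) → ℂ) : ℝ :=
  sSup { r : ℝ | ∃ Φ, IsProductState Φ ∧ r = ‖qInner Φ ψ‖ }

/-- Geometric entanglement. -/
def EG {n : ℕ} (ψ : (Fin n → ZMod 2) → ℂ) : ℝ :=
  - Real.logb 2 (LambdaMax ψ ^ 2)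

end GeomEnt

/-! The overlap of `(⨂ i, U i) ψ` with a product state `Φ = ⨂ i, φ i` equals the overlap of `ψ`
with `(⨂ i, (U i)ᴴ) Φ = ⨂ i, (U i)ᴴ φ i`, which is again a product state because each `(U i)ᴴ`
preserves the norm of `φ i`. So every overlap value of `(⨂ i, U i) ψ` is one of `ψ`, and applying
this to the inverse `⨂ i, (U i)ᴴ` gives the reverse inclusion: the two suprema are taken over the
same set. -/

namespace Matrix

lemma star_mulVec_dotProduct_mulVec_of_mem_unitaryGroup {d 𝕜 : Type*} [Fintype d]
    [DecidableEq d] [RCLike 𝕜] {U : Matrix d d 𝕜} (hU : U ∈ unitaryGroup d 𝕜) (v : d → 𝕜) :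
    star (U *ᵥ v) ⬝ᵥ (U *ᵥ v) = star v ⬝ᵥ v := by
  rw [star_mulVec, ← dotProduct_mulVec, mulVec_mulVec, ← star_eq_conjTranspose,
    mem_unitaryGroup_iff'.mp hU, one_mulVec]

lemma sum_norm_sq_mulVec_of_mem_unitaryGroup {d 𝕜 : Type*} [Fintype d]
    [DecidableEq d] [RCLike 𝕜] {U : Matrix d d 𝕜} (hU : U ∈ unitaryGroup d 𝕜) (v : d → 𝕜) :
    ∑ a, ‖(U *ᵥ v) a‖ ^ 2 = ∑ a, ‖v a‖ ^ 2 := by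
  have h := star_mulVec_dotProduct_mulVec_of_mem_unitaryGroup hU v
  simp only [dotProduct, Pi.star_apply, RCLike.star_def, RCLike.conj_mul] at h
  exact_mod_cast h

end Matrix

namespace GeomEnt

open Matrix

section LocalMulVec

variable {ι d R : Type*} [Fintype ι] [DecidableEq ι] [Fintype d] [CommSemiring R]

/-- `localMulVec U ψ = (⨂ i, U i) ψ`. -/
def localMulVec (U : ι → Matrix d d R) (ψ : (ι → d) → R) : (ι → d) → R :=
  fun x => ∑ y, (∏ i, U i (x i) (y i)) * ψ y

lemma localMulVec_localMulVec (U V : ι → Matrix d d R) (ψ : (ι → d) → R) :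
    localMulVec U (localMulVec V ψ) = localMulVec (fun i => U i * V i) ψ := by
  funext x
  simp only [localMulVec, mul_apply, Fintype.prod_sum, Finset.mul_sum, Finset.sum_mul]
  rw [Finset.sum_comm]
  refine Finset.sum_congr rfl fun z _ => Finset.sum_congr rfl fun y _ => ?_
  rw [Finset.prod_mul_distrib]
  ring

lemma localMulVec_one [DecidableEq d] (ψ : (ι → d) → R) :
    localMulVec (fun _ => (1 : Matrix d d R)) ψ = ψ := by
  funext x
  simp only [localMulVec, one_apply, Fintype.prod_boole, ← funext_iff, ite_mul, one_mul,
    zero_mul, Finset.sum_ite_eq, Finset.mem_univ, if_true]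

lemma localMulVec_prod (U : ι → Matrix d d R) (φ : ι → d → R) :
    localMulVec U (fun y => ∏ i, φ i (y i)) = fun x => ∏ i, (U i *ᵥ φ i) (x i) := by
  funext x
  simp only [localMulVec, mulVec, dotProduct, Fintype.prod_sum, ← Finset.prod_mul_distrib]

end LocalMulVec

lemma qInner_localMulVec {n : ℕ} (U : Fin n → Matrix (ZMod 2) (ZMod 2) ℂ)
    (Φ ψ : (Fin n → ZMod 2) → ℂ) :
    qInner Φ (localMulVec U ψ) = qInner (localMulVec (fun i => (U i)ᴴ) Φ) ψ := by
  simp only [qInner, localMulVec, conjTranspose_apply, map_sum, map_mul, map_prod,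
    RCLike.star_def, Complex.conj_conj, Finset.mul_sum, Finset.sum_mul]
  rw [Finset.sum_comm]
  refine Finset.sum_congr rfl fun y _ => Finset.sum_congr rfl fun x _ => ?_
  ring

lemma IsProductState.localMulVec {n : ℕ} {Φ : (Fin n → ZMod 2) → ℂ} (hΦ : IsProductState Φ)
    {U : Fin n → Matrix (ZMod 2) (ZMod 2) ℂ} (hU : ∀ i, U i ∈ unitaryGroup (ZMod 2) ℂ) :
    IsProductState (localMulVec U Φ) := by
  obtain ⟨φ, hφ, hΦ⟩ := hΦ
  obtain rfl : Φ = fun x => ∏ i, φ i (x i) := funext hΦ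
  refine ⟨fun i => U i *ᵥ φ i, fun i => ?_, fun x => by rw [localMulVec_prod]⟩
  have h := sum_norm_sq_mulVec_of_mem_unitaryGroup (hU i) (φ i)
  have sum_zmod_two (f : ZMod 2 → ℝ) : ∑ a, f a = f 0 + f 1 := Fin.sum_univ_two f
  rwa [sum_zmod_two, sum_zmod_two, hφ i] at h

def overlaps {n : ℕ} (ψ : (Fin n → ZMod 2) → ℂ) : Set ℝ :=
  { r : ℝ | ∃ Φ, IsProductState Φ ∧ r = ‖qInner Φ ψ‖ }

lemma overlaps_localMulVec_subset {n : ℕ} {U : Fin n → Matrix (ZMod 2) (ZMod 2) ℂ}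
    (hU : ∀ i, U i ∈ unitaryGroup (ZMod 2) ℂ) (ψ : (Fin n → ZMod 2) → ℂ) :
    overlaps (localMulVec U ψ) ⊆ overlaps ψ := by
  rintro r ⟨Φ, hΦ, rfl⟩
  exact ⟨_, hΦ.localMulVec fun i => Unitary.star_mem (hU i), by rw [qInner_localMulVec]; rfl⟩

lemma overlaps_localMulVec {n : ℕ} {U : Fin n → Matrix (ZMod 2) (ZMod 2) ℂ}
    (hU : ∀ i, U i ∈ unitaryGroup (ZMod 2) ℂ) (ψ : (Fin n → ZMod 2) → ℂ) :
    overlaps (localMulVec U ψ) = overlaps ψ := by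
  refine (overlaps_localMulVec_subset hU ψ).antisymm ?_
  have hψ : localMulVec (fun i => (U i)ᴴ) (localMulVec U ψ) = ψ := by
    simp only [localMulVec_localMulVec, ← star_eq_conjTranspose,
      fun i => mem_unitaryGroup_iff'.mp (hU i), localMulVec_one]
  conv_lhs => rw [← hψ]
  exact overlaps_localMulVec_subset (fun i => Unitary.star_mem (hU i)) _

theorem geometric_entanglement_local_unitary_invariance_general
    {n : ℕ} (ψ : (Fin n → ZMod 2) → ℂ)
    (U : Fin n → Matrix (ZMod 2) (ZMod 2) ℂ)
    (hU : ∀ i, U i ∈ Matrix.unitaryGroup (ZMod 2) ℂ)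
    (ψ' : (Fin n → ZMod 2) → ℂ)
    (hψ' : ∀ x, ψ' x = ∑ y : Fin n → ZMod 2, (∏ i, U i (x i) (y i)) * ψ y) :
    LambdaMax ψ' = LambdaMax ψ ∧ EG ψ' = EG ψ := by
  obtain rfl : ψ' = localMulVec U ψ := funext hψ'
  have hΛ : LambdaMax (localMulVec U ψ) = LambdaMax ψ :=
    congrArg sSup (overlaps_localMulVec hU ψ)
  exact ⟨hΛ, by rw [EG, EG, hΛ]⟩

/-- applying a local (tensor product of single-qubit) unitary does not
change the maximal overlap, hence not the geometric entanglement. -/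
theorem geometric_entanglement_local_unitary_invariance
    {n : ℕ} (ψ : (Fin n → ZMod 2) → ℂ) (hψ : IsState ψ)
    (U : Fin n → Matrix (ZMod 2) (ZMod 2) ℂ)
    (hU : ∀ i, U i ∈ Matrix.unitaryGroup (ZMod 2) ℂ)
    (ψ' : (Fin n → ZMod 2) → ℂ)
    (hψ' : ∀ x, ψ' x = ∑ y : Fin n → ZMod 2, (∏ i, U i (x i) (y i)) * ψ y) :
    LambdaMax ψ' = LambdaMax ψ ∧ EG ψ' = EG ψ :=
  geometric_entanglement_local_unitary_invariance_general ψ U hU ψ' hψ'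

end GeomEnt
end
end

section
/- Let ψ be an n-qubit state all of whose amplitudes are real and nonnegative (ψ x ≥ 0 for all x), and let ψ' be an n-qubit state with |ψ' x| = ψ x for all x. Then Λ_max(ψ') ≤ Λ_max(ψ), and hence E_G(ψ') ≥ E_G(ψ). (The phase-modulus argument that is the key step in the proof of the double semion theorem: multiplying amplitudes of a nonnegative state by arbitrary phases cannot increase the maximal product overlap.) -/
/-!
Replacing every factor of a product state Φ by its modulus gives a product state |Φ|, and
because ψ is nonnegative, |⟨Φ, ψ'⟩| ≤ ∑ₓ |Φ x| |ψ' x| = ∑ₓ |Φ x| ψ x = ⟨|Φ|, ψ⟩ ≤ Λ_max(ψ).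
The entanglement statement follows since E_G is antitone in Λ_max, which is positive as soon as
the state is nonzero (the overlap with a computational basis state is an amplitude); and ψ' = 0
forces ψ = 0.
-/

open scoped BigOperators
open scoped Classical

noncomputable section

namespace GeomEnt

theorem zmod_two_eq_zero_or_eq_one (b : ZMod 2) : b = 0 ∨ b = 1 := by
  revert b
  decide

variable {n : ℕ}

namespace IsProductState

theorem norm_le_one {Φ : (Fin n → ZMod 2) → ℂ} (hΦ : IsProductState Φ)
    (x : Fin n → ZMod 2) : ‖Φ x‖ ≤ 1 := by
  obtain ⟨φ, hφ, hΦ⟩ := hΦ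
  have hfactor : ∀ i b, ‖φ i b‖ ≤ 1 := fun i b => by
    refine (sq_le_one_iff₀ (norm_nonneg _)).mp ?_
    obtain rfl | rfl := zmod_two_eq_zero_or_eq_one b <;>
      nlinarith [hφ i, sq_nonneg ‖φ i 0‖, sq_nonneg ‖φ i 1‖]
  rw [hΦ x, norm_prod]
  exact Finset.prod_le_one (fun _ _ => norm_nonneg _) fun i _ => hfactor i _

theorem ofReal_norm {Φ : (Fin n → ZMod 2) → ℂ} (hΦ : IsProductState Φ) :
    IsProductState fun x => ((‖Φ x‖ : ℝ) : ℂ) := by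
  obtain ⟨φ, hφ, hΦ⟩ := hΦ
  refine ⟨fun i b => ((‖φ i b‖ : ℝ) : ℂ), fun i => ?_, fun x => ?_⟩
  · simpa only [Complex.norm_real, norm_norm] using hφ i
  · simp only [hΦ x, norm_prod, Complex.ofReal_prod]

end IsProductState

theorem isProductState_indicator (x : Fin n → ZMod 2) :
    IsProductState fun y => if y = x then (1 : ℂ) else 0 := by
  refine ⟨fun i b => if b = x i then 1 else 0, fun i => ?_, fun y => ?_⟩
  · obtain h | h := zmod_two_eq_zero_or_eq_one (x i) <;> simp [h]
  · rw [Finset.prod_boole]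
    simp [funext_iff]

theorem qInner_indicator (x : Fin n → ZMod 2) (ψ : (Fin n → ZMod 2) → ℂ) :
    qInner (fun y => if y = x then (1 : ℂ) else 0) ψ = ψ x := by
  simp [qInner]

theorem norm_qInner_le (Φ ψ : (Fin n → ZMod 2) → ℂ) :
    ‖qInner Φ ψ‖ ≤ ∑ x, ‖Φ x‖ * ‖ψ x‖ :=
  (norm_sum_le _ _).trans_eq <| by simp only [norm_mul, Complex.norm_conj]

theorem qInner_ofReal_norm_of_nonneg (Φ : (Fin n → ZMod 2) → ℂ) {ψ : (Fin n → ZMod 2) → ℂ}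
    (hψ : ∀ x, ψ x = ((‖ψ x‖ : ℝ) : ℂ)) :
    qInner (fun x => ((‖Φ x‖ : ℝ) : ℂ)) ψ = ((∑ x, ‖Φ x‖ * ‖ψ x‖ : ℝ) : ℂ) := by
  rw [qInner, Complex.ofReal_sum]
  refine Finset.sum_congr rfl fun x _ => ?_
  rw [Complex.conj_ofReal, Complex.ofReal_mul, ← hψ x]

theorem bddAbove_overlaps (ψ : (Fin n → ZMod 2) → ℂ) :
    BddAbove { r : ℝ | ∃ Φ, IsProductState Φ ∧ r = ‖qInner Φ ψ‖ } := by
  refine ⟨∑ x, ‖ψ x‖, ?_⟩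
  rintro r ⟨Φ, hΦ, rfl⟩
  refine (norm_qInner_le Φ ψ).trans (Finset.sum_le_sum fun x _ => ?_)
  exact mul_le_of_le_one_left (norm_nonneg _) (hΦ.norm_le_one x)

theorem norm_qInner_le_lambdaMax {Φ : (Fin n → ZMod 2) → ℂ} (hΦ : IsProductState Φ)
    (ψ : (Fin n → ZMod 2) → ℂ) : ‖qInner Φ ψ‖ ≤ LambdaMax ψ :=
  le_csSup (bddAbove_overlaps ψ) ⟨Φ, hΦ, rfl⟩

theorem lambdaMax_le {ψ : (Fin n → ZMod 2) → ℂ} {c : ℝ} (hc : 0 ≤ c)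
    (h : ∀ Φ, IsProductState Φ → ‖qInner Φ ψ‖ ≤ c) : LambdaMax ψ ≤ c :=
  Real.sSup_le (by rintro r ⟨Φ, hΦ, rfl⟩; exact h Φ hΦ) hc

theorem norm_le_lambdaMax (ψ : (Fin n → ZMod 2) → ℂ) (x : Fin n → ZMod 2) :
    ‖ψ x‖ ≤ LambdaMax ψ :=
  qInner_indicator x ψ ▸ norm_qInner_le_lambdaMax (isProductState_indicator x) ψ

theorem lambdaMax_nonneg (ψ : (Fin n → ZMod 2) → ℂ) : 0 ≤ LambdaMax ψ :=
  (norm_nonneg _).trans (norm_le_lambdaMax ψ 0)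

theorem lambdaMax_pos {ψ : (Fin n → ZMod 2) → ℂ} (hψ : ψ ≠ 0) : 0 < LambdaMax ψ := by
  obtain ⟨x, hx⟩ := Function.ne_iff.mp hψ
  exact (norm_pos_iff.mpr hx).trans_le (norm_le_lambdaMax ψ x)

theorem lambdaMax_le_lambdaMax_of_norm_eq {ψ ψ' : (Fin n → ZMod 2) → ℂ}
    (hψ : ∀ x, ψ x = ((‖ψ x‖ : ℝ) : ℂ)) (hmod : ∀ x, ‖ψ' x‖ = ‖ψ x‖) :
    LambdaMax ψ' ≤ LambdaMax ψ := by
  refine lambdaMax_le (lambdaMax_nonneg ψ) fun Φ hΦ => ?_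
  calc ‖qInner Φ ψ'‖ ≤ ∑ x, ‖Φ x‖ * ‖ψ x‖ := by simpa only [hmod] using norm_qInner_le Φ ψ'
    _ = ‖qInner (fun x => ((‖Φ x‖ : ℝ) : ℂ)) ψ‖ := by
      rw [qInner_ofReal_norm_of_nonneg Φ hψ, Complex.norm_real, Real.norm_of_nonneg]
      positivity
    _ ≤ LambdaMax ψ := norm_qInner_le_lambdaMax hΦ.ofReal_norm ψ

theorem EG_le_EG_of_lambdaMax_le {ψ ψ' : (Fin n → ZMod 2) → ℂ} (hψ' : 0 < LambdaMax ψ')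
    (h : LambdaMax ψ' ≤ LambdaMax ψ) : EG ψ ≤ EG ψ' :=
  neg_le_neg <| Real.logb_le_logb_of_le one_lt_two (by positivity) (by gcongr)

theorem phase_modulus_argument_general
    {n : ℕ} (ψ ψ' : (Fin n → ZMod 2) → ℂ)
    (hnonneg : ∀ x, ψ x = ((‖ψ x‖ : ℝ) : ℂ))
    (hmod : ∀ x, ‖ψ' x‖ = ‖ψ x‖) :
    LambdaMax ψ' ≤ LambdaMax ψ ∧ EG ψ ≤ EG ψ' := by
  have hΛ := lambdaMax_le_lambdaMax_of_norm_eq hnonneg hmod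
  refine ⟨hΛ, ?_⟩
  by_cases hψ' : ψ' = 0
  · have hψ : ψ = ψ' := funext fun x => by
      rw [hψ', Pi.zero_apply, ← norm_eq_zero, ← hmod, hψ', Pi.zero_apply, norm_zero]
    rw [hψ]
  · exact EG_le_EG_of_lambdaMax_le (lambdaMax_pos hψ') hΛ

/-- if ψ has real nonnegative amplitudes and ψ' has the same moduli
(i.e. ψ' is obtained from ψ by multiplying amplitudes by arbitrary phases), then
Λ_max(ψ') ≤ Λ_max(ψ), hence E_G(ψ') ≥ E_G(ψ). -/
theorem phase_modulus_argument
    {n : ℕ} (ψ ψ' : (Fin n → ZMod 2) → ℂ)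
    (hψstate : IsState ψ) (hψ'state : IsState ψ')
    (hnonneg : ∀ x, ψ x = ((‖ψ x‖ : ℝ) : ℂ))
    (hmod : ∀ x, ‖ψ' x‖ = ‖ψ x‖) :
    LambdaMax ψ' ≤ LambdaMax ψ ∧ EG ψ ≤ EG ψ' :=
  phase_modulus_argument_general ψ ψ' hnonneg hmod

end GeomEnt
end
end

section
/- Let C ⊆ (Fin n → ZMod 2) be a self-orthogonal F₂-linear code. Then Λ_max(ψ_C) = |C|^{−1/2}; that is, the geometric entanglement of spins of the CSS state ψ_C of self-orthogonal type is E_G(ψ_C) = log₂|C|. (Theorem 8, which in particular yields the geometric entanglement n_p − 2 of color code ground states on arbitrary 2-colexes.) -/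
open scoped BigOperators
open scoped Classical

noncomputable section

namespace GeomEnt

def codeState {n : ℕ} (C : Set (Fin n → ZMod 2)) : (Fin n → ZMod 2) → ℂ :=
  fun x => if x ∈ C then (((Real.sqrt (Nat.card C))⁻¹ : ℝ) : ℂ) else 0

/-!
For a product state with factors `φᵢ` put `aᵢ = conj ∘ φᵢ`; then
`⟨Φ, ψ_C⟩ = |C|^{-1/2} ∑_{c ∈ C} ∏ᵢ aᵢ(cᵢ)`, and the basis state `|0⋯0⟩` attains `|C|^{-1/2}`.
That the sum over `C` has modulus at most `1` follows from the stronger bound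
`∑_{w ∈ C^⊥} |∑_{c ∈ C} ∏ᵢ aᵢ((w + c)ᵢ)|² ≤ |C|`, proved by induction on `n` by shortening `C`
at the first coordinate. If every codeword vanishes there, the sum factors and
`|a₀(0)|² + |a₀(1)|² = 1` closes the step. Otherwise a codeword `h` with `h₀ = 1` splits `C` into
the shortened code and its translate by `h`; Cauchy–Schwarz bounds each term by two terms of the
shortened problem, and `|C|` is twice the size of the shortened code. Self-orthogonality keeps the
shortened code self-orthogonal and the tail of `h` in its dual.
-/

open Finset

lemma sum_comp_le_sum_of_injOn {ι κ M : Type*} [AddCommMonoid M] [Preorder M] [AddLeftMono M]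
    {s : Finset ι} {t : Finset κ} {g : ι → κ} {f : κ → M}
    (hmaps : Set.MapsTo g s t) (hinj : Set.InjOn g s) (hf : ∀ j ∈ t, 0 ≤ f j) :
    ∑ i ∈ s, f (g i) ≤ ∑ j ∈ t, f j := by
  classical
  rw [← sum_image hinj]
  exact sum_le_sum_of_subset_of_nonneg (image_subset_iff.2 hmaps) fun j hj _ => hf j hj

lemma norm_mul_add_mul_sq_le {R : Type*} [SeminormedRing R] {p q x y : R}
    (hpq : ‖p‖ ^ 2 + ‖q‖ ^ 2 = 1) : ‖p * x + q * y‖ ^ 2 ≤ ‖x‖ ^ 2 + ‖y‖ ^ 2 := by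
  have hle : ‖p * x + q * y‖ ≤ ‖p‖ * ‖x‖ + ‖q‖ * ‖y‖ :=
    (norm_add_le _ _).trans (add_le_add (norm_mul_le _ _) (norm_mul_le _ _))
  have := pow_le_pow_left₀ (norm_nonneg _) hle 2
  nlinarith [sq_nonneg (‖p‖ * ‖y‖ - ‖q‖ * ‖x‖)]

lemma zmod_two_ne_zero_iff_eq_one (z : ZMod 2) : z ≠ 0 ↔ z = 1 := by
  revert z
  decide

lemma pi_zmod_two_add_self {ι : Type*} (x : ι → ZMod 2) : x + x = 0 :=
  funext fun i => CharTwo.add_self_eq_zero (x i)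

lemma sum_univ_zmod_two {M : Type*} [AddCommMonoid M] (f : ZMod 2 → M) :
    ∑ b, f b = f 0 + f 1 :=
  Fin.sum_univ_two f

lemma norm_sq_add_norm_sq_add_one {E : Type*} [SeminormedAddGroup E] {φ : ZMod 2 → E}
    (hφ : ‖φ 0‖ ^ 2 + ‖φ 1‖ ^ 2 = 1) (b : ZMod 2) : ‖φ b‖ ^ 2 + ‖φ (b + 1)‖ ^ 2 = 1 := by
  obtain rfl | rfl : b = 0 ∨ b = 1 := by revert b; decide
  · rwa [zero_add]
  · rwa [show (1 + 1 : ZMod 2) = 0 from rfl, add_comm]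

lemma dotProduct_eq_head_add_tail {n : ℕ} {α : Type*} [Mul α] [AddCommMonoid α]
    (x y : Fin (n + 1) → α) :
    x ⬝ᵥ y = x 0 * y 0 + Fin.tail x ⬝ᵥ Fin.tail y :=
  Fin.sum_univ_succ _

lemma injOn_tail_of_head_eq {n : ℕ} {α : Type*} {s : Set (Fin (n + 1) → α)} {b : α}
    (hs : ∀ x ∈ s, x 0 = b) : Set.InjOn Fin.tail s := by
  intro x hx y hy hxy
  rw [← Fin.cons_self_tail x, ← Fin.cons_self_tail y, hs x hx, hs y hy, hxy]

section Code

variable {n : ℕ}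

def dualCode (C : Finset (Fin n → ZMod 2)) : Finset (Fin n → ZMod 2) :=
  {w | ∀ c ∈ C, c ⬝ᵥ w = 0}

def shorten (C : Finset (Fin (n + 1) → ZMod 2)) : Finset (Fin n → ZMod 2) :=
  {c ∈ C | c 0 = 0}.image Fin.tail

def cosetSum (a : Fin n → ZMod 2 → ℂ) (C : Finset (Fin n → ZMod 2)) (w : Fin n → ZMod 2) : ℂ :=
  ∑ c ∈ C, ∏ i, a i ((w + c) i)

variable {C : Finset (Fin n → ZMod 2)}

lemma mem_dualCode {w : Fin n → ZMod 2} :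
    w ∈ dualCode C ↔ ∀ c ∈ C, c ⬝ᵥ w = 0 := by
  simp [dualCode]

lemma add_mem_dualCode {u v : Fin n → ZMod 2}
    (hu : u ∈ dualCode C) (hv : v ∈ dualCode C) : u + v ∈ dualCode C :=
  mem_dualCode.2 fun c hc => by
    rw [dotProduct_add, mem_dualCode.1 hu c hc, mem_dualCode.1 hv c hc, add_zero]

lemma subset_dualCode (hso : ∀ c ∈ C, ∀ d ∈ C, c ⬝ᵥ d = 0) :
    C ⊆ dualCode C :=
  fun d hd => mem_dualCode.2 fun c hc => hso c hc d hd

end Code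

section Shortening

variable {n : ℕ} {C : Finset (Fin (n + 1) → ZMod 2)}

lemma card_shorten : #(shorten C) = #{c ∈ C | c 0 = 0} :=
  card_image_of_injOn (injOn_tail_of_head_eq fun _ hc => (mem_filter.1 hc).2)

lemma shorten_add_mem (hadd : ∀ c ∈ C, ∀ d ∈ C, c + d ∈ C) :
    ∀ u ∈ shorten C, ∀ v ∈ shorten C, u + v ∈ shorten C := by
  simp only [shorten, mem_image, mem_filter]
  rintro _ ⟨c, ⟨hc, hc0⟩, rfl⟩ _ ⟨d, ⟨hd, hd0⟩, rfl⟩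
  exact ⟨c + d, ⟨hadd c hc d hd, by simp [hc0, hd0]⟩, rfl⟩

lemma shorten_selfOrthogonal (hso : ∀ c ∈ C, ∀ d ∈ C, c ⬝ᵥ d = 0) :
    ∀ u ∈ shorten C, ∀ v ∈ shorten C, u ⬝ᵥ v = 0 := by
  simp only [shorten, mem_image, mem_filter]
  rintro _ ⟨c, ⟨hc, hc0⟩, rfl⟩ _ ⟨d, ⟨hd, -⟩, rfl⟩
  simpa [dotProduct_eq_head_add_tail, hc0] using hso c hc d hd

lemma tail_mem_dualCode_shorten {w : Fin (n + 1) → ZMod 2} (hw : w ∈ dualCode C) :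
    Fin.tail w ∈ dualCode (shorten C) := by
  simp only [mem_dualCode, shorten, mem_filter, mem_image] at hw ⊢
  rintro _ ⟨c, ⟨hc, hc0⟩, rfl⟩
  simpa [dotProduct_eq_head_add_tail, hc0] using hw c hc

lemma sum_filter_head_eq_zero (a : Fin (n + 1) → ZMod 2 → ℂ) (w : Fin (n + 1) → ZMod 2) :
    ∑ c ∈ C with c 0 = 0, ∏ i, a i ((w + c) i) =
      a 0 (w 0) * cosetSum (fun i => a i.succ) (shorten C) (Fin.tail w) := by
  rw [cosetSum, shorten, sum_image (injOn_tail_of_head_eq fun _ hc => (mem_filter.1 hc).2),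
    mul_sum]
  refine sum_congr rfl fun c hc => ?_
  rw [Fin.prod_univ_succ, Pi.add_apply, (mem_filter.1 hc).2, add_zero]
  rfl

lemma cosetSum_eq_of_forall_head_eq_zero (hC : ∀ c ∈ C, c 0 = 0)
    (a : Fin (n + 1) → ZMod 2 → ℂ) (w : Fin (n + 1) → ZMod 2) :
    cosetSum a C w = a 0 (w 0) * cosetSum (fun i => a i.succ) (shorten C) (Fin.tail w) := by
  rw [← sum_filter_head_eq_zero, filter_true_of_mem hC, cosetSum]

variable {h : Fin (n + 1) → ZMod 2}

lemma filter_head_ne_zero_eq_map (hadd : ∀ c ∈ C, ∀ d ∈ C, c + d ∈ C) (hh : h ∈ C)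
    (h0 : h 0 = 1) : {c ∈ C | ¬c 0 = 0} = {c ∈ C | c 0 = 0}.map (addRightEmbedding h) := by
  ext c
  simp only [mem_filter, mem_map, addRightEmbedding_apply, ← ne_eq, zmod_two_ne_zero_iff_eq_one]
  constructor
  · rintro ⟨hc, hc1⟩
    refine ⟨c + h, ⟨hadd c hc h hh, by simp [hc1, h0]; rfl⟩, ?_⟩
    rw [add_assoc, pi_zmod_two_add_self, add_zero]
  · rintro ⟨d, ⟨hd, hd0⟩, rfl⟩
    exact ⟨hadd d hd h hh, by simp [hd0, h0]⟩

lemma card_eq_two_mul_card_shorten (hadd : ∀ c ∈ C, ∀ d ∈ C, c + d ∈ C) (hh : h ∈ C)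
    (h0 : h 0 = 1) : #C = 2 * #(shorten C) := by
  rw [card_shorten, ← card_filter_add_card_filter_not (s := C) (fun c => c 0 = 0),
    filter_head_ne_zero_eq_map hadd hh h0, card_map, two_mul]

lemma cosetSum_eq_of_head_eq_one (hadd : ∀ c ∈ C, ∀ d ∈ C, c + d ∈ C) (hh : h ∈ C)
    (h0 : h 0 = 1) (a : Fin (n + 1) → ZMod 2 → ℂ) (w : Fin (n + 1) → ZMod 2) :
    cosetSum a C w =
      a 0 (w 0) * cosetSum (fun i => a i.succ) (shorten C) (Fin.tail w) +
        a 0 (w 0 + 1) * cosetSum (fun i => a i.succ) (shorten C) (Fin.tail w + Fin.tail h) := by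
  rw [cosetSum, ← sum_filter_add_sum_filter_not C (fun c => c 0 = 0),
    filter_head_ne_zero_eq_map hadd hh h0, sum_map, sum_filter_head_eq_zero]
  simp_rw [addRightEmbedding_apply, ← add_assoc, add_right_comm w _ h]
  rw [sum_filter_head_eq_zero, Pi.add_apply, h0]
  rfl

end Shortening

section Bound

variable {n : ℕ}

lemma sum_dualCode_norm_cosetSum_sq_le_of_forall_head_eq_zero {a : Fin (n + 1) → ZMod 2 → ℂ}
    (ha : ∀ i, ‖a i 0‖ ^ 2 + ‖a i 1‖ ^ 2 = 1) {C : Finset (Fin (n + 1) → ZMod 2)}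
    (hC : ∀ c ∈ C, c 0 = 0)
    (ih : ∑ u ∈ dualCode (shorten C), ‖cosetSum (fun i => a i.succ) (shorten C) u‖ ^ 2 ≤
      #(shorten C)) :
    ∑ w ∈ dualCode C, ‖cosetSum a C w‖ ^ 2 ≤ #C := by
  set G := cosetSum (fun i => a i.succ) (shorten C)
  have hfiber (b : ZMod 2) :
      ∑ w ∈ dualCode C with w 0 = b, ‖G (Fin.tail w)‖ ^ 2 ≤ #(shorten C) :=
    (sum_comp_le_sum_of_injOn (fun w hw => tail_mem_dualCode_shorten (mem_filter.1 hw).1)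
      (injOn_tail_of_head_eq fun w hw => (mem_filter.1 hw).2) fun _ _ => sq_nonneg _).trans ih
  have hcard : #(shorten C) = #C := by rw [card_shorten, filter_true_of_mem hC]
  calc ∑ w ∈ dualCode C, ‖cosetSum a C w‖ ^ 2
      = ∑ b, ∑ w ∈ dualCode C with w 0 = b, ‖a 0 b‖ ^ 2 * ‖G (Fin.tail w)‖ ^ 2 := by
        rw [← sum_fiberwise (dualCode C) (fun w => w 0)]
        refine sum_congr rfl fun b _ => sum_congr rfl fun w hw => ?_
        rw [cosetSum_eq_of_forall_head_eq_zero hC, norm_mul, mul_pow, (mem_filter.1 hw).2]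
    _ ≤ ∑ b, ‖a 0 b‖ ^ 2 * (#(shorten C) : ℝ) := by
        gcongr with b
        rw [← mul_sum]
        exact mul_le_mul_of_nonneg_left (hfiber b) (sq_nonneg _)
    _ = #C := by rw [← sum_mul, sum_univ_zmod_two, ha 0, one_mul, hcard]

lemma sum_dualCode_norm_cosetSum_sq_le_of_head_eq_one {a : Fin (n + 1) → ZMod 2 → ℂ}
    (ha : ∀ i, ‖a i 0‖ ^ 2 + ‖a i 1‖ ^ 2 = 1) {C : Finset (Fin (n + 1) → ZMod 2)}
    (hadd : ∀ c ∈ C, ∀ d ∈ C, c + d ∈ C) (hso : ∀ c ∈ C, ∀ d ∈ C, c ⬝ᵥ d = 0)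
    {h : Fin (n + 1) → ZMod 2} (hh : h ∈ C) (h0 : h 0 = 1)
    (ih : ∑ u ∈ dualCode (shorten C), ‖cosetSum (fun i => a i.succ) (shorten C) u‖ ^ 2 ≤
      #(shorten C)) :
    ∑ w ∈ dualCode C, ‖cosetSum a C w‖ ^ 2 ≤ #C := by
  set G := cosetSum (fun i => a i.succ) (shorten C)
  have hmaps : Set.MapsTo Fin.tail (dualCode C : Set (Fin (n + 1) → ZMod 2))
      (dualCode (shorten C) : Set (Fin n → ZMod 2)) :=
    fun _ hw => tail_mem_dualCode_shorten hw
  -- On the dual code the head coordinate is recovered from the tail through `h ⬝ᵥ w = 0`.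
  have hinj : Set.InjOn Fin.tail (dualCode C : Set (Fin (n + 1) → ZMod 2)) := by
    intro w hw v hv hwv
    have hw' := mem_dualCode.1 hw h hh
    have hv' := mem_dualCode.1 hv h hh
    rw [dotProduct_eq_head_add_tail, h0, one_mul, hwv] at hw'
    rw [dotProduct_eq_head_add_tail, h0, one_mul] at hv'
    rw [← Fin.cons_self_tail w, ← Fin.cons_self_tail v, hwv,
      add_right_cancel (hw'.trans hv'.symm)]
  have hshift : Set.MapsTo (· + Fin.tail h) (dualCode (shorten C) : Set (Fin n → ZMod 2))
      (dualCode (shorten C)) :=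
    fun _ hu => add_mem_dualCode hu (hmaps (subset_dualCode hso hh))
  calc ∑ w ∈ dualCode C, ‖cosetSum a C w‖ ^ 2
      ≤ ∑ w ∈ dualCode C, (‖G (Fin.tail w)‖ ^ 2 + ‖G (Fin.tail w + Fin.tail h)‖ ^ 2) := by
        refine sum_le_sum fun w _ => ?_
        rw [cosetSum_eq_of_head_eq_one hadd hh h0]
        exact norm_mul_add_mul_sq_le (norm_sq_add_norm_sq_add_one (ha 0) (w 0))
    _ ≤ #(shorten C) + #(shorten C) := by
        rw [sum_add_distrib]
        gcongr
        · exact (sum_comp_le_sum_of_injOn hmaps hinj fun _ _ => sq_nonneg _).trans ih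
        · exact (sum_comp_le_sum_of_injOn (g := fun w => Fin.tail w + Fin.tail h)
            (hshift.comp hmaps) ((add_left_injective _).injOn.comp hinj hmaps)
            fun _ _ => sq_nonneg _).trans ih
    _ = #C := by rw [card_eq_two_mul_card_shorten hadd hh h0]; push_cast; ring

lemma sum_dualCode_norm_cosetSum_sq_le_of_zero (a : Fin 0 → ZMod 2 → ℂ)
    (C : Finset (Fin 0 → ZMod 2)) : ∑ w ∈ dualCode C, ‖cosetSum a C w‖ ^ 2 ≤ #C := by
  have hC : (#C : ℝ) ≤ 1 := by exact_mod_cast card_le_one_of_subsingleton C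
  have hD : (#(dualCode C) : ℝ) ≤ 1 := by exact_mod_cast card_le_one_of_subsingleton _
  simp only [cosetSum, univ_eq_empty, prod_empty, sum_const, nsmul_eq_mul, mul_one,
    Complex.norm_natCast]
  nlinarith [Nat.cast_nonneg (α := ℝ) #C]

theorem sum_dualCode_norm_cosetSum_sq_le :
    ∀ {n : ℕ} {a : Fin n → ZMod 2 → ℂ}, (∀ i, ‖a i 0‖ ^ 2 + ‖a i 1‖ ^ 2 = 1) →
      ∀ {C : Finset (Fin n → ZMod 2)}, (∀ c ∈ C, ∀ d ∈ C, c + d ∈ C) →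
        (∀ c ∈ C, ∀ d ∈ C, c ⬝ᵥ d = 0) → ∑ w ∈ dualCode C, ‖cosetSum a C w‖ ^ 2 ≤ #C
  | 0, a, _, C, _, _ => sum_dualCode_norm_cosetSum_sq_le_of_zero a C
  | n + 1, a, ha, C, hadd, hso => by
    have ih := sum_dualCode_norm_cosetSum_sq_le (fun i => ha i.succ) (shorten_add_mem hadd)
      (shorten_selfOrthogonal hso)
    by_cases hC : ∀ c ∈ C, c 0 = 0
    · exact sum_dualCode_norm_cosetSum_sq_le_of_forall_head_eq_zero ha hC ih
    · obtain ⟨h, hh, h0⟩ := not_forall₂.1 hC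
      exact sum_dualCode_norm_cosetSum_sq_le_of_head_eq_one ha hadd hso hh
        ((zmod_two_ne_zero_iff_eq_one _).1 h0) ih

end Bound

theorem norm_sum_prod_le_one {n : ℕ} {a : Fin n → ZMod 2 → ℂ}
    (ha : ∀ i, ‖a i 0‖ ^ 2 + ‖a i 1‖ ^ 2 = 1) {C : Finset (Fin n → ZMod 2)} (hne : C.Nonempty)
    (hadd : ∀ c ∈ C, ∀ d ∈ C, c + d ∈ C) (hso : ∀ c ∈ C, ∀ d ∈ C, c ⬝ᵥ d = 0) :
    ‖∑ c ∈ C, ∏ i, a i (c i)‖ ≤ 1 := by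
  -- Translating by a codeword permutes `C`, so every coset sum over `w ∈ C` is the one at `0`.
  have htrans : ∀ w ∈ C, cosetSum a C w = ∑ c ∈ C, ∏ i, a i (c i) := fun w hw =>
    sum_nbij' (w + ·) (w + ·) (fun c hc => hadd w hw c hc) (fun c hc => hadd w hw c hc)
      (fun c _ => by rw [← add_assoc, pi_zmod_two_add_self, zero_add])
      (fun c _ => by rw [← add_assoc, pi_zmod_two_add_self, zero_add]) fun _ _ => rfl
  have hpos : (0 : ℝ) < #C := by exact_mod_cast hne.card_pos
  have hle : #C * ‖∑ c ∈ C, ∏ i, a i (c i)‖ ^ 2 ≤ #C * 1 :=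
    calc #C * ‖∑ c ∈ C, ∏ i, a i (c i)‖ ^ 2 = ∑ w ∈ C, ‖cosetSum a C w‖ ^ 2 := by
          rw [sum_congr rfl fun w hw => congrArg (‖·‖ ^ 2) (htrans w hw), sum_const,
            nsmul_eq_mul]
      _ ≤ ∑ w ∈ dualCode C, ‖cosetSum a C w‖ ^ 2 :=
          sum_le_sum_of_subset_of_nonneg (subset_dualCode hso) fun _ _ _ => sq_nonneg _
      _ ≤ #C * 1 := (sum_dualCode_norm_cosetSum_sq_le ha hadd hso).trans_eq (mul_one _).symm
  exact (sq_le_one_iff₀ (norm_nonneg _)).1 (le_of_mul_le_mul_left hle hpos)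

lemma qInner_codeState {n : ℕ} (Φ : (Fin n → ZMod 2) → ℂ) (C : Set (Fin n → ZMod 2)) :
    qInner Φ (codeState C) =
      (((√(Nat.card C))⁻¹ : ℝ) : ℂ) * ∑ x ∈ C.toFinset, (starRingEnd ℂ) (Φ x) := by
  simp only [qInner, codeState, mul_ite, mul_zero]
  rw [sum_ite, sum_const_zero, add_zero, mul_sum]
  exact sum_congr (by ext; simp) fun _ _ => mul_comm _ _

lemma norm_qInner_codeState_le {n : ℕ} {Φ : (Fin n → ZMod 2) → ℂ} (hΦ : IsProductState Φ)
    (C : Submodule (ZMod 2) (Fin n → ZMod 2)) (hso : ∀ u ∈ C, ∀ v ∈ C, u ⬝ᵥ v = 0) :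
    ‖qInner Φ (codeState C)‖ ≤ (√(Nat.card C))⁻¹ := by
  obtain ⟨φ, hφ, hΦφ⟩ := hΦ
  have hconj : ∀ x, (starRingEnd ℂ) (Φ x) = ∏ i, (starRingEnd ℂ) (φ i (x i)) := fun x => by
    rw [hΦφ, map_prod]
  have hbound : ‖∑ x ∈ (C : Set (Fin n → ZMod 2)).toFinset, (starRingEnd ℂ) (Φ x)‖ ≤ 1 := by
    simp only [hconj]
    refine norm_sum_prod_le_one (a := fun i b => (starRingEnd ℂ) (φ i b)) (fun i => ?_) ⟨0, ?_⟩
      ?_ ?_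
    · simpa only [Complex.norm_conj] using hφ i
    · simp
    · simpa using fun c hc d hd => C.add_mem hc hd
    · simpa using hso
  rw [qInner_codeState, norm_mul, Complex.norm_real, Real.norm_of_nonneg (by positivity)]
  exact mul_le_of_le_one_right (by positivity) hbound

lemma isProductState_indicator_zero {n : ℕ} :
    IsProductState (fun x : Fin n → ZMod 2 => if x = 0 then (1 : ℂ) else 0) :=
  ⟨fun _ b => if b = 0 then 1 else 0, fun _ => by simp,
    fun x => by simp [Fintype.prod_boole, funext_iff]⟩

lemma qInner_indicator_zero {n : ℕ} (ψ : (Fin n → ZMod 2) → ℂ) :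
    qInner (fun x => if x = 0 then (1 : ℂ) else 0) ψ = ψ 0 := by
  simp [qInner, apply_ite (starRingEnd ℂ)]

/-- Theorem 8: for a self-orthogonal F₂-linear code C, the CSS state
ψ_C has maximal product overlap |C|^{-1/2}, i.e. geometric entanglement of spins
E_G(ψ_C) = log₂|C|. -/
theorem self_orthogonal_CSS_state_GE
    (n : ℕ) (C : Submodule (ZMod 2) (Fin n → ZMod 2))
    (hso : ∀ u ∈ C, ∀ v ∈ C, ∑ i, u i * v i = (0 : ZMod 2)) :
    LambdaMax (codeState (C : Set (Fin n → ZMod 2))) = (Real.sqrt (Nat.card C))⁻¹ ∧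
    EG (codeState (C : Set (Fin n → ZMod 2))) = Real.logb 2 (Nat.card C) := by
  have hΛ : LambdaMax (codeState (C : Set (Fin n → ZMod 2))) = (√(Nat.card C))⁻¹ := by
    refine IsGreatest.csSup_eq ⟨⟨_, isProductState_indicator_zero, ?_⟩, ?_⟩
    · rw [qInner_indicator_zero, codeState, if_pos (SetLike.mem_coe.2 C.zero_mem),
        Complex.norm_real, Real.norm_of_nonneg (by positivity)]
      rfl
    · rintro r ⟨Φ, hΦ, rfl⟩
      exact norm_qInner_codeState_le hΦ C hso
  have hcard : (0 : ℝ) < Nat.card C := by exact_mod_cast Nat.card_pos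
  refine ⟨hΛ, ?_⟩
  rw [EG, hΛ, inv_pow, Real.sq_sqrt hcard.le, Real.logb_inv, neg_neg]

end GeomEnt
end
end

section
/- Let C ⊆ (Fin n → ZMod 2) be a self-orthogonal F₂-linear code and let a_i, b_i ∈ ℂ for each i ∈ Fin n. For each i define the 2×2 matrix A_i (indexed by ZMod 2) with entries (A_i)_{0,0} = a_i, (A_i)_{0,1} = (A_i)_{1,0} = b_i, (A_i)_{1,1} = −a_i, and write φ_i 0 = a_i, φ_i 1 = b_i. Then ∑_{u∈C} ∏_i φ_i (u i) = (1/|C|) · ∑_{u∈C} ∑_{v∈C} ∏_i (A_i)_{u i, v i}. (This is Lemma 9 in bra-ket form: √|C| · ⟨C|Φ⟩ = ⟨C| A |C⟩ for the product state Φ with local amplitudes (a_i, b_i) and A = ⊗_i A_i.) -/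
open scoped BigOperators
open scoped Classical

noncomputable section

namespace GeomEnt

/-- The 2×2 matrix A_i with entries A_{0,0} = a, A_{0,1} = A_{1,0} = b, A_{1,1} = −a,
indexed by ZMod 2. -/
def Amat (a b : ℂ) : ZMod 2 → ZMod 2 → ℂ :=
  fun x y => if x = 0 then (if y = 0 then a else b) else (if y = 0 then b else -a)

/-- The local amplitudes φ_i with φ_i 0 = a, φ_i 1 = b. -/
def phiAmp (a b : ℂ) : ZMod 2 → ℂ :=
  fun x => if x = 0 then a else b

/-- Lemma 9: for a self-orthogonal F₂-linear code C and any local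
amplitudes (a_i, b_i), one has
∑_{u∈C} ∏_i φ_i(u i) = |C|⁻¹ · ∑_{u∈C} ∑_{v∈C} ∏_i (A_i)_{u i, v i},
i.e. √|C| ⟨C|Φ⟩ = ⟨C|A|C⟩. -/
theorem self_orthogonal_overlap_expectation
    (n : ℕ) (C : Submodule (ZMod 2) (Fin n → ZMod 2))
    (hso : ∀ u ∈ C, ∀ v ∈ C, ∑ i, u i * v i = (0 : ZMod 2))
    (a b : Fin n → ℂ) :
    (∑ u ∈ Finset.univ.filter (· ∈ C), ∏ i, phiAmp (a i) (b i) (u i)) =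
      (Nat.card C : ℂ)⁻¹ *
        ∑ u ∈ Finset.univ.filter (· ∈ C), ∑ v ∈ Finset.univ.filter (· ∈ C),
          ∏ i, Amat (a i) (b i) (u i) (v i) := by
  classical
  set S := Finset.univ.filter (· ∈ C) with hS
  have hmem : ∀ u, u ∈ S ↔ u ∈ C := by intro u; simp [hS]
  have hcases : ∀ z : ZMod 2, z = 0 ∨ z = 1 := by decide
  have hA : ∀ (p q : ℂ) (x y : ZMod 2),
      Amat p q x y = (-1 : ℂ) ^ ((x * y).val) * phiAmp p q (x + y) := by
    intro p q x y
    rcases hcases x with rfl | rfl <;> rcases hcases y with rfl | rfl <;>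
      simp [Amat, phiAmp, show (1 + 1 : ZMod 2) = 0 from rfl, ZMod.val_one]
  have key : ∀ u ∈ S, ∀ v ∈ S,
      (∏ i, Amat (a i) (b i) (u i) (v i)) =
        ∏ i, phiAmp (a i) (b i) ((u + v) i) := by
    intro u hu v hv
    have hu' := (hmem u).1 hu
    have hv' := (hmem v).1 hv
    have heven : Even (∑ i, ((u i * v i).val)) := by
      have h0 : ((∑ i, ((u i * v i).val) : ℕ) : ZMod 2) = 0 := by
        push_cast
        simp only [ZMod.natCast_val, ZMod.cast_id]
        exact hso u hu' v hv'
      have := (ZMod.natCast_eq_zero_iff _ 2).1 h0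
      exact even_iff_two_dvd.2 this
    calc (∏ i, Amat (a i) (b i) (u i) (v i))
        = ∏ i, ((-1 : ℂ) ^ ((u i * v i).val) * phiAmp (a i) (b i) (u i + v i)) := by
          exact Finset.prod_congr rfl fun i _ => hA _ _ _ _
      _ = (∏ i, (-1 : ℂ) ^ ((u i * v i).val)) * ∏ i, phiAmp (a i) (b i) (u i + v i) :=
          Finset.prod_mul_distrib
      _ = ∏ i, phiAmp (a i) (b i) ((u + v) i) := by
          rw [Finset.prod_pow_eq_pow_sum, heven.neg_one_pow, one_mul]
          rfl
  have reindex : ∀ u ∈ S,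
      (∑ v ∈ S, ∏ i, phiAmp (a i) (b i) ((u + v) i)) =
        ∑ w ∈ S, ∏ i, phiAmp (a i) (b i) (w i) := by
    intro u hu
    have hu' := (hmem u).1 hu
    refine Finset.sum_equiv (Equiv.addLeft u) ?_ ?_
    · intro v
      simp only [hmem, Equiv.coe_addLeft]
      constructor
      · intro hv; exact C.add_mem hu' hv
      · intro hv
        have h2 : u + (u + v) ∈ C := C.add_mem hu' hv
        have : u + (u + v) = v := by
          rw [← add_assoc]
          have : u + u = 0 := by
            funext i; exact CharTwo.add_self_eq_zero _
          rw [this, zero_add]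
        rwa [this] at h2
    · intro v hv; rfl
  have cardS : (S.card : ℂ) = (Nat.card C : ℂ) := by
    have : Nat.card C = S.card := by
      rw [Nat.card_eq_fintype_card, hS]
      exact Fintype.card_subtype _
    rw [this]
  have hne : (Nat.card C : ℂ) ≠ 0 := by
    have : 0 < Nat.card C := Nat.card_pos
    exact_mod_cast this.ne'
  rw [Finset.sum_congr rfl (fun u hu => Finset.sum_congr rfl (fun v hv => key u hu v hv))]
  rw [Finset.sum_congr rfl (fun u hu => reindex u hu)]
  rw [Finset.sum_const, nsmul_eq_mul, cardS, inv_mul_cancel_left₀ hne]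

end GeomEnt
end
end

section
/- Lemma (spectrum of reduced density operators): with the setup of the general formalism, let {1,…,m} = A ⊔ B be a partition of the parties such that 𝒢_Φ(B) ⊆ 𝒢_Φ(A), and let ρ_A be the reduced density operator of Ψ on H_A = ⊗_{k∈A} H_k (the partial trace of the rank-one projection onto Ψ over H_B = ⊗_{k∈B} H_k). Then ρ_A² = ( |𝒢_Φ(A)|·|𝒢_Φ(B)| / (|𝒢|·|𝒢_Φ|) ) · ρ_A; in particular the spectrum of ρ_A is flat, i.e. every nonzero eigenvalue of ρ_A equals |𝒢_Φ(A)|·|𝒢_Φ(B)| / (|𝒢|·|𝒢_Φ|). -/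
open scoped BigOperators
open scoped Classical

noncomputable section

namespace GenForm

variable {G : Type} [Group G] [Fintype G] {n m : ℕ}
  {ι : Fin m → Type} [∀ k, Fintype (ι k)] [∀ k, DecidableEq (ι k)]

/-- `O` assigns to every party `k` a unitary representation of 𝒢 = G^{×n} on the
(concretely modelled) finite-dimensional Hilbert space H_k = (ι k → ℂ). -/
def IsLocalRep (O : (k : Fin m) → (Fin n → G) → Matrix (ι k) (ι k) ℂ) : Prop :=
  ∀ k : Fin m,
    (∀ t, O k t ∈ Matrix.unitaryGroup (ι k) ℂ) ∧
    O k 1 = 1 ∧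
    ∀ t u, O k (t * u) = O k t * O k u

/-- The product vector Φ = φ₁ ⊗ ⋯ ⊗ φ_m, as an amplitude function. -/
def prodVec (φ : (k : Fin m) → ι k → ℂ) : ((k : Fin m) → ι k) → ℂ :=
  fun x => ∏ k, φ k (x k)

/-- The vector O^t Φ = ⊗_k O_k^t φ_k. -/
def actVec (O : (k : Fin m) → (Fin n → G) → Matrix (ι k) (ι k) ℂ)
    (φ : (k : Fin m) → ι k → ℂ) (t : Fin n → G) : ((k : Fin m) → ι k) → ℂ :=
  fun x => ∏ k, ((O k t).mulVec (φ k)) (x k)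

/-- The vector O_X^t Φ, where the truncated operator acts as O_k^t for k ∈ X and as
the identity elsewhere. -/
def actVecOn (O : (k : Fin m) → (Fin n → G) → Matrix (ι k) (ι k) ℂ)
    (φ : (k : Fin m) → ι k → ℂ) (X : Finset (Fin m)) (t : Fin n → G) :
    ((k : Fin m) → ι k) → ℂ :=
  fun x => ∏ k, if k ∈ X then ((O k t).mulVec (φ k)) (x k) else φ k (x k)

/-- Each local vector O_k^t φ_k and O_k^u φ_k is either equal or orthogonal. -/
def OrthCond (O : (k : Fin m) → (Fin n → G) → Matrix (ι k) (ι k) ℂ)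
    (φ : (k : Fin m) → ι k → ℂ) : Prop :=
  ∀ (k : Fin m) (t u : Fin n → G),
    (O k t).mulVec (φ k) = (O k u).mulVec (φ k) ∨
    ∑ x : ι k, (starRingEnd ℂ) (((O k t).mulVec (φ k)) x) * ((O k u).mulVec (φ k)) x = 0

/-- The global stabiliser 𝒢_Φ = { t : O^t Φ = Φ }. -/
def globalStab (O : (k : Fin m) → (Fin n → G) → Matrix (ι k) (ι k) ℂ)
    (φ : (k : Fin m) → ι k → ℂ) : Set (Fin n → G) :=
  { t | actVec O φ t = prodVec φ }

/-- The local stabiliser 𝒢_Φ(X) = { t : O_X^t Φ = Φ }. -/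
def localStab (O : (k : Fin m) → (Fin n → G) → Matrix (ι k) (ι k) ℂ)
    (φ : (k : Fin m) → ι k → ℂ) (X : Finset (Fin m)) : Set (Fin n → G) :=
  { t | actVecOn O φ X t = prodVec φ }

/-- The symmetrized state Ψ = (|𝒢|·|𝒢_Φ|)^{-1/2} ∑_{t∈𝒢} O^t Φ. -/
def Psi (O : (k : Fin m) → (Fin n → G) → Matrix (ι k) (ι k) ℂ)
    (φ : (k : Fin m) → ι k → ℂ) : ((k : Fin m) → ι k) → ℂ :=
  fun x => (((Real.sqrt ((Fintype.card G) ^ n * Nat.card (globalStab O φ)))⁻¹ : ℝ) : ℂ) *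
    ∑ t : Fin n → G, actVec O φ t x

/-- A product state of the m parties. -/
def IsProd (Φ : ((k : Fin m) → ι k) → ℂ) : Prop :=
  ∃ χ : (k : Fin m) → ι k → ℂ,
    (∀ k, ∑ x : ι k, ‖χ k x‖ ^ 2 = 1) ∧
    ∀ x, Φ x = ∏ k, χ k (x k)

/-- Maximal overlap with product states of the parties. -/
def LMax (ψ : ((k : Fin m) → ι k) → ℂ) : ℝ :=
  sSup { r : ℝ | ∃ Φ, IsProd Φ ∧
    r = ‖∑ x : (k : Fin m) → ι k, (starRingEnd ℂ) (Φ x) * ψ x‖ }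

/-- Geometric entanglement. -/
def EG (ψ : ((k : Fin m) → ι k) → ℂ) : ℝ :=
  - Real.logb 2 (LMax ψ ^ 2)

end GenForm

namespace GenForm

variable {G : Type} [Group G] [Fintype G] {n m : ℕ}
  {ι : Fin m → Type} [∀ k, Fintype (ι k)] [∀ k, DecidableEq (ι k)]

/-- Glue a configuration on the parties in `A` with one on the parties outside `A`. -/
def glue (A : Finset (Fin m)) (xA : (k : { k : Fin m // k ∈ A }) → ι k.1)
    (zB : (k : { k : Fin m // k ∉ A }) → ι k.1) : (k : Fin m) → ι k :=
  fun k => if h : k ∈ A then xA ⟨k, h⟩ else zB ⟨k, h⟩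

/-- The reduced density operator of a state ψ on the parties in `A`: the partial trace
of the rank-one projection |ψ⟩⟨ψ| over the parties outside `A`. -/
def rhoA (ψ : ((k : Fin m) → ι k) → ℂ) (A : Finset (Fin m)) :
    Matrix ((k : { k : Fin m // k ∈ A }) → ι k.1)
      ((k : { k : Fin m // k ∈ A }) → ι k.1) ℂ :=
  Matrix.of fun xA yA =>
    ∑ zB : (k : { k : Fin m // k ∉ A }) → ι k.1,
      ψ (glue A xA zB) * (starRingEnd ℂ) (ψ (glue A yA zB))


end GenForm

/-!
Write `Ψ = c ∑_t a_t ⊗ b_t`, where `a_t` and `b_t` are the restrictions of `O^t Φ` to the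
parties in `A` and in `B = Aᶜ`, and `c² = 1 / (|𝒢| |𝒢_Φ|)`. By the equal-or-orthogonal condition,
`⟨b_t, b_u⟩` is the indicator of `t⁻¹ u ∈ 𝒢_Φ(B)`, and likewise for `A`. Hence
`ρ_A = c² ∑_{t,u} [t⁻¹ u ∈ 𝒢_Φ(B)] |a_t⟩⟨a_u|`, and since `𝒢_Φ(B) ⊆ 𝒢_Φ(A)` we have `a_t = a_u` in
every surviving term, so `ρ_A = c² |𝒢_Φ(B)| N` with `N = ∑_t |a_t⟩⟨a_t|`. The same computation
with `A` in place of `B` gives `N² = |𝒢_Φ(A)| N`.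
-/

namespace GenForm

open Matrix

theorem eq_of_hasEigenvalue_of_mul_self_eq_smul {K α : Type*} [Field K] [Fintype α]
    [DecidableEq α] {M : Matrix α α K} {c μ : K} (hM : M * M = c • M) (hμ : μ ≠ 0)
    (h : Module.End.HasEigenvalue (toLin' M) μ) : μ = c := by
  obtain ⟨v, hv⟩ := h.exists_hasEigenvector
  have hMv : toLin' M v = μ • v := hv.apply_eq_smul
  have hsq : (μ * μ) • v = (c * μ) • v := by
    rw [← smul_smul, ← hMv, ← map_smul, ← hMv, ← LinearMap.comp_apply, ← toLin'_mul, hM,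
      map_smul, LinearMap.smul_apply, hMv, smul_smul]
  exact mul_right_cancel₀ hμ (smul_left_injective K hv.2 hsq)

theorem sum_star_prod_mul_prod {κ : Type*} [Fintype κ] [DecidableEq κ] {α : κ → Type*}
    [∀ k, Fintype (α k)] (a b : ∀ k, α k → ℂ) :
    ∑ x : ∀ k, α k, star (∏ k, a k (x k)) * ∏ k, b k (x k) = ∏ k, star (a k) ⬝ᵥ b k := by
  simp only [dotProduct, Fintype.prod_sum, star_prod, ← Finset.prod_mul_distrib, Pi.star_apply]

theorem star_dotProduct_eq_ite {α : Type*} [Fintype α] {v w : α → ℂ}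
    (hv : star v ⬝ᵥ v = 1) (h : v = w ∨ star v ⬝ᵥ w = 0) :
    star v ⬝ᵥ w = if v = w then 1 else 0 := by
  by_cases hvw : v = w
  · rw [if_pos hvw, ← hvw, hv]
  · rw [if_neg hvw, h.resolve_left hvw]

section cosetMatrix

variable {T : Type*} [Group T]

/-- The Gram matrix of a family indexed by `T` whose members agree exactly on the left cosets
`t S`. -/
def cosetMatrix (S : Set T) : Matrix T T ℂ :=
  of fun t u => if t⁻¹ * u ∈ S then 1 else 0

theorem cosetMatrix_transpose {S : Set T} (hS : ∀ t u, t⁻¹ * u ∈ S → u⁻¹ * t ∈ S) :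
    (cosetMatrix S)ᵀ = cosetMatrix S := by
  ext t u
  simp only [transpose_apply, cosetMatrix, of_apply]
  exact if_congr ⟨hS u t, hS t u⟩ rfl rfl

theorem mul_cosetMatrix [Fintype T] {α : Type*} {S : Set T} {V : Matrix α T ℂ}
    (hV : ∀ t u, t⁻¹ * u ∈ S → ∀ x, V x t = V x u) :
    V * cosetMatrix S = (Nat.card S : ℂ) • V := by
  ext x u
  have hcount : ∑ t : T, (if t⁻¹ * u ∈ S then (1 : ℂ) else 0) = Nat.card S := by
    rw [← Equiv.sum_comp ((Equiv.inv T).trans (Equiv.mulLeft u))]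
    simp [Finset.sum_boole, Nat.card_eq_fintype_card, Fintype.card_subtype]
  have hconst : ∀ t, V x t * (if t⁻¹ * u ∈ S then 1 else 0) =
      (if t⁻¹ * u ∈ S then (1 : ℂ) else 0) * V x u := by
    intro t
    split_ifs with h
    · rw [hV t u h]; ring
    · ring
  rw [mul_apply, Matrix.smul_apply, smul_eq_mul, ← hcount, Finset.sum_mul]
  exact Finset.sum_congr rfl fun t _ => hconst t

end cosetMatrix

section amplitudes

variable {G : Type} {n m : ℕ} {ι : Fin m → Type} [∀ k, Fintype (ι k)]
  {O : (k : Fin m) → (Fin n → G) → Matrix (ι k) (ι k) ℂ} {φ : (k : Fin m) → ι k → ℂ}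

theorem star_dotProduct_self_eq_one (hφ : ∀ k, ∑ x : ι k, ‖φ k x‖ ^ 2 = 1) (k : Fin m) :
    star (φ k) ⬝ᵥ φ k = 1 := by
  simp only [dotProduct, Pi.star_apply, RCLike.star_def, Complex.conj_mul']
  exact_mod_cast hφ k

/-- Column `t` is `⊗_{k : κ} O_{j k}^t φ_{j k}`. The parties are indexed through an arbitrary
finite `κ` so that this applies to both `↥A` and `{k // k ∉ A}` with their own `Fintype`
instances. -/
def orbitMatrix {κ : Type*} [Fintype κ] (j : κ → Fin m)
    (O : (k : Fin m) → (Fin n → G) → Matrix (ι k) (ι k) ℂ) (φ : (k : Fin m) → ι k → ℂ) :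
    Matrix ((k : κ) → ι (j k)) (Fin n → G) ℂ :=
  of fun x t => ∏ k, (O (j k) t *ᵥ φ (j k)) (x k)

theorem actVec_glue (A : Finset (Fin m)) (t : Fin n → G)
    (x : (k : A) → ι k.1) (z : (k : { k : Fin m // k ∉ A }) → ι k.1) :
    actVec O φ t (glue A x z) =
      orbitMatrix ((↑) : A → Fin m) O φ x t *
        orbitMatrix ((↑) : { k : Fin m // k ∉ A } → Fin m) O φ z t := by
  unfold actVec
  rw [← Finset.prod_mul_prod_compl A, ← Finset.prod_coe_sort A,
    Finset.prod_subtype Aᶜ fun k => Finset.mem_compl]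
  congr 1 <;> refine Finset.prod_congr rfl fun k _ => ?_
  · rw [glue, dif_pos k.2]
  · rw [glue, dif_neg k.2]

def amplitudeMatrix (ψ : ((k : Fin m) → ι k) → ℂ) (A : Finset (Fin m)) :
    Matrix ((k : A) → ι k.1) ((k : { k : Fin m // k ∉ A }) → ι k.1) ℂ :=
  of fun x z => ψ (glue A x z)

theorem rhoA_eq_amplitudeMatrix_mul_conjTranspose (ψ : ((k : Fin m) → ι k) → ℂ)
    (A : Finset (Fin m)) : rhoA ψ A = amplitudeMatrix ψ A * (amplitudeMatrix ψ A)ᴴ := by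
  ext x y
  simp only [rhoA, amplitudeMatrix, of_apply, mul_apply, conjTranspose_apply, RCLike.star_def]

theorem amplitudeMatrix_Psi [Fintype G] (A : Finset (Fin m)) :
    amplitudeMatrix (Psi O φ) A =
      (((√((Fintype.card G : ℝ) ^ n * Nat.card (globalStab O φ)))⁻¹ : ℝ) : ℂ) •
        (orbitMatrix ((↑) : A → Fin m) O φ *
          (orbitMatrix ((↑) : { k : Fin m // k ∉ A } → Fin m) O φ)ᵀ) := by
  ext x z
  simp only [amplitudeMatrix, Psi, of_apply, Matrix.smul_apply, mul_apply, transpose_apply,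
    actVec_glue, smul_eq_mul]

theorem orbitMatrix_mul_cosetMatrix [Group G] [Fintype G] {κ : Type*} [Fintype κ]
    {j : κ → Fin m} {S : Set (Fin n → G)}
    (hS : ∀ t u, t⁻¹ * u ∈ S → ∀ k, O (j k) t *ᵥ φ (j k) = O (j k) u *ᵥ φ (j k)) :
    orbitMatrix j O φ * cosetMatrix S = (Nat.card S : ℂ) • orbitMatrix j O φ :=
  mul_cosetMatrix fun t u h x => by simp only [orbitMatrix, of_apply, hS t u h]

end amplitudes

section orbit

variable {G : Type} [Group G] {n m : ℕ} {ι : Fin m → Type} [∀ k, Fintype (ι k)]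
  [∀ k, DecidableEq (ι k)]
  {O : (k : Fin m) → (Fin n → G) → Matrix (ι k) (ι k) ℂ} {φ : (k : Fin m) → ι k → ℂ}

theorem IsLocalRep.star_mulVec_dotProduct_mulVec (hO : IsLocalRep O) (k : Fin m)
    (t : Fin n → G) (v : ι k → ℂ) : star (O k t *ᵥ v) ⬝ᵥ (O k t *ᵥ v) = star v ⬝ᵥ v := by
  rw [star_mulVec, dotProduct_mulVec, vecMul_vecMul, ← star_eq_conjTranspose,
    mem_unitaryGroup_iff'.mp ((hO k).1 t), vecMul_one]

theorem IsLocalRep.one_mulVec (hO : IsLocalRep O) (k : Fin m) (v : ι k → ℂ) :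
    O k 1 *ᵥ v = v := by
  rw [(hO k).2.1, Matrix.one_mulVec]

theorem IsLocalRep.mulVec_mulVec (hO : IsLocalRep O) (k : Fin m) (s r : Fin n → G)
    (v : ι k → ℂ) : O k s *ᵥ (O k r *ᵥ v) = O k (s * r) *ᵥ v := by
  rw [Matrix.mulVec_mulVec, (hO k).2.2]

theorem IsLocalRep.mulVec_inv_mul_eq_self_iff (hO : IsLocalRep O) (k : Fin m)
    (t u : Fin n → G) (v : ι k → ℂ) : O k (t⁻¹ * u) *ᵥ v = v ↔ O k t *ᵥ v = O k u *ᵥ v := by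
  constructor
  · intro h
    conv_lhs => rw [← h, hO.mulVec_mulVec, mul_inv_cancel_left]
  · intro h
    rw [← hO.mulVec_mulVec, ← h, hO.mulVec_mulVec, inv_mul_cancel, hO.one_mulVec]

theorem star_mulVec_dotProduct_mulVec_eq_ite (hO : IsLocalRep O)
    (hφ : ∀ k, ∑ x : ι k, ‖φ k x‖ ^ 2 = 1) (horth : OrthCond O φ) (k : Fin m)
    (t u : Fin n → G) :
    star (O k t *ᵥ φ k) ⬝ᵥ (O k u *ᵥ φ k) = if O k t *ᵥ φ k = O k u *ᵥ φ k then 1 else 0 :=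
  star_dotProduct_eq_ite (by rw [hO.star_mulVec_dotProduct_mulVec, star_dotProduct_self_eq_one hφ])
    (horth k t u)

theorem mem_localStab_iff (hO : IsLocalRep O) (hφ : ∀ k, ∑ x : ι k, ‖φ k x‖ ^ 2 = 1)
    (horth : OrthCond O φ) {X : Finset (Fin m)} {t : Fin n → G} :
    t ∈ localStab O φ X ↔ ∀ k ∈ X, O k t *ᵥ φ k = φ k := by
  constructor
  · intro ht k hk
    have hoverlap : ∏ k, star (φ k) ⬝ᵥ (fun y => if k ∈ X then (O k t *ᵥ φ k) y else φ k y)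
        = 1 := by
      rw [← sum_star_prod_mul_prod]
      change ∑ x, star (prodVec φ x) * actVecOn O φ X t x = 1
      rw [show actVecOn O φ X t = prodVec φ from ht]
      unfold prodVec
      rw [sum_star_prod_mul_prod]
      exact Finset.prod_eq_one fun k _ => star_dotProduct_self_eq_one hφ k
    have hfactor := Finset.prod_ne_zero_iff.mp (hoverlap ▸ one_ne_zero) k (Finset.mem_univ k)
    have hdot := star_mulVec_dotProduct_mulVec_eq_ite hO hφ horth k 1 t
    rw [hO.one_mulVec] at hdot
    simp only [if_pos hk, hdot] at hfactor
    exact (ite_ne_right_iff.mp hfactor).1.symm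
  · intro h
    funext x
    refine Finset.prod_congr rfl fun k _ => ?_
    split_ifs with hk
    · rw [h k hk]
    · rfl

theorem inv_mul_mem_localStab_iff (hO : IsLocalRep O) (hφ : ∀ k, ∑ x : ι k, ‖φ k x‖ ^ 2 = 1)
    (horth : OrthCond O φ) {X : Finset (Fin m)} {t u : Fin n → G} :
    t⁻¹ * u ∈ localStab O φ X ↔ ∀ k ∈ X, O k t *ᵥ φ k = O k u *ᵥ φ k := by
  simp only [mem_localStab_iff hO hφ horth, hO.mulVec_inv_mul_eq_self_iff]

variable {κ : Type*} [Fintype κ] {j : κ → Fin m} {S : Set (Fin n → G)}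

theorem conjTranspose_orbitMatrix_mul_self [DecidableEq κ] (hO : IsLocalRep O)
    (hφ : ∀ k, ∑ x : ι k, ‖φ k x‖ ^ 2 = 1) (horth : OrthCond O φ)
    (hS : ∀ t u, t⁻¹ * u ∈ S ↔ ∀ k, O (j k) t *ᵥ φ (j k) = O (j k) u *ᵥ φ (j k)) :
    (orbitMatrix j O φ)ᴴ * orbitMatrix j O φ = cosetMatrix S := by
  ext t u
  simp only [mul_apply, conjTranspose_apply, orbitMatrix, of_apply, cosetMatrix]
  rw [sum_star_prod_mul_prod]
  simp only [star_mulVec_dotProduct_mulVec_eq_ite hO hφ horth, Finset.prod_boole,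
    Finset.mem_univ, true_implies, hS]

theorem orbitMatrix_mul_conjTranspose_mul_self [Fintype G] [DecidableEq κ] (hO : IsLocalRep O)
    (hφ : ∀ k, ∑ x : ι k, ‖φ k x‖ ^ 2 = 1) (horth : OrthCond O φ)
    (hS : ∀ t u, t⁻¹ * u ∈ S ↔ ∀ k, O (j k) t *ᵥ φ (j k) = O (j k) u *ᵥ φ (j k)) :
    orbitMatrix j O φ * (orbitMatrix j O φ)ᴴ * (orbitMatrix j O φ * (orbitMatrix j O φ)ᴴ) =
      (Nat.card S : ℂ) • (orbitMatrix j O φ * (orbitMatrix j O φ)ᴴ) := by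
  rw [Matrix.mul_assoc, ← Matrix.mul_assoc _ (orbitMatrix j O φ),
    conjTranspose_orbitMatrix_mul_self hO hφ horth hS, ← Matrix.mul_assoc,
    orbitMatrix_mul_cosetMatrix fun t u h => (hS t u).mp h, Matrix.smul_mul]

theorem rhoA_Psi [Fintype G] (hO : IsLocalRep O) (hφ : ∀ k, ∑ x : ι k, ‖φ k x‖ ^ 2 = 1)
    (horth : OrthCond O φ) {A : Finset (Fin m)} (hsub : localStab O φ Aᶜ ⊆ localStab O φ A) :
    rhoA (Psi O φ) A =
      (((Nat.card (localStab O φ Aᶜ) : ℝ) /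
          ((Fintype.card G : ℝ) ^ n * Nat.card (globalStab O φ)) : ℝ) : ℂ) •
        (orbitMatrix ((↑) : A → Fin m) O φ * (orbitMatrix ((↑) : A → Fin m) O φ)ᴴ) := by
  set VA := orbitMatrix ((↑) : A → Fin m) O φ
  set VB := orbitMatrix ((↑) : { k : Fin m // k ∉ A } → Fin m) O φ
  set c : ℝ := (√((Fintype.card G : ℝ) ^ n * Nat.card (globalStab O φ)))⁻¹ with hc_def
  have hSB : ∀ t u, t⁻¹ * u ∈ localStab O φ Aᶜ ↔
      ∀ k : { k : Fin m // k ∉ A }, O k t *ᵥ φ k = O k u *ᵥ φ k := fun t u => by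
    simp only [inv_mul_mem_localStab_iff hO hφ horth, Finset.mem_compl, Subtype.forall]
  have hgramB : VBᵀ * VBᵀᴴ = cosetMatrix (localStab O φ Aᶜ) := by
    rw [transpose_conjTranspose, ← conjTranspose_transpose, ← transpose_mul,
      conjTranspose_orbitMatrix_mul_self hO hφ horth hSB]
    exact cosetMatrix_transpose fun t u h =>
      (hSB u t).mpr fun k => ((hSB t u).mp h k).symm
  have hcolA : ∀ t u, t⁻¹ * u ∈ localStab O φ Aᶜ →
      ∀ k : A, O k t *ᵥ φ k = O k u *ᵥ φ k :=
    fun t u h k => (inv_mul_mem_localStab_iff hO hφ horth).mp (hsub h) k k.2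
  have hc : c * c = ((Fintype.card G : ℝ) ^ n * Nat.card (globalStab O φ))⁻¹ := by
    rw [hc_def, ← mul_inv, Real.mul_self_sqrt (by positivity)]
  calc rhoA (Psi O φ) A = ((c * c : ℝ) : ℂ) • (VA * (VBᵀ * VBᵀᴴ) * VAᴴ) := by
        rw [rhoA_eq_amplitudeMatrix_mul_conjTranspose, amplitudeMatrix_Psi, conjTranspose_smul,
          conjTranspose_mul, Matrix.smul_mul, Matrix.mul_smul, smul_smul, RCLike.star_def,
          Complex.conj_ofReal, Complex.ofReal_mul]
        simp only [Matrix.mul_assoc]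
        rfl
    _ = ((c * c : ℝ) : ℂ) • ((Nat.card (localStab O φ Aᶜ) : ℂ) • (VA * VAᴴ)) := by
        rw [hgramB, orbitMatrix_mul_cosetMatrix hcolA, Matrix.smul_mul]
    _ = _ := by
        rw [smul_smul, hc, div_eq_mul_inv]
        push_cast
        ring_nf

end orbit

end GenForm

namespace GenForm

variable {G : Type} [Group G] [Fintype G] {n m : ℕ}
  {ι : Fin m → Type} [∀ k, Fintype (ι k)] [∀ k, DecidableEq (ι k)]

open Matrix

/-- Lemma, spectrum of reduced density operators: if 𝒢_Φ(B) ⊆ 𝒢_Φ(A)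
for B = Aᶜ, then ρ_A² = (|𝒢_Φ(A)|·|𝒢_Φ(B)|/(|𝒢|·|𝒢_Φ|)) ρ_A; in particular every
nonzero eigenvalue of ρ_A equals |𝒢_Φ(A)|·|𝒢_Φ(B)|/(|𝒢|·|𝒢_Φ|). -/
theorem reduced_density_flat_spectrum
    (O : (k : Fin m) → (Fin n → G) → Matrix (ι k) (ι k) ℂ) (hO : IsLocalRep O)
    (φ : (k : Fin m) → ι k → ℂ) (hφ : ∀ k, ∑ x : ι k, ‖φ k x‖ ^ 2 = 1)
    (horth : OrthCond O φ)
    (A : Finset (Fin m))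
    (hsub : localStab O φ Aᶜ ⊆ localStab O φ A) :
    rhoA (Psi O φ) A * rhoA (Psi O φ) A =
      ((((Nat.card (localStab O φ A) : ℝ) * (Nat.card (localStab O φ Aᶜ) : ℝ)) /
          (((Fintype.card G : ℝ) ^ n) * (Nat.card (globalStab O φ) : ℝ)) : ℝ) : ℂ) •
        rhoA (Psi O φ) A ∧
    ∀ μ : ℂ, μ ≠ 0 →
      Module.End.HasEigenvalue (Matrix.toLin' (rhoA (Psi O φ) A)) μ →
      μ = ((((Nat.card (localStab O φ A) : ℝ) * (Nat.card (localStab O φ Aᶜ) : ℝ)) /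
          (((Fintype.card G : ℝ) ^ n) * (Nat.card (globalStab O φ) : ℝ)) : ℝ) : ℂ) := by
  have hSA : ∀ t u, t⁻¹ * u ∈ localStab O φ A ↔ ∀ k : A, O k t *ᵥ φ k = O k u *ᵥ φ k :=
    fun t u => by simp only [inv_mul_mem_localStab_iff hO hφ horth, Subtype.forall]
  refine ⟨?sq, fun μ hμ h => eq_of_hasEigenvalue_of_mul_self_eq_smul ?sq hμ h⟩
  rw [rhoA_Psi hO hφ horth hsub, smul_mul_smul_comm,
    orbitMatrix_mul_conjTranspose_mul_self hO hφ horth hSA, smul_smul, smul_smul]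
  congr 1
  push_cast
  ring

end GenForm
end
end
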